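/- arXiv:math/0610143 — 5 statements merged into one kernel-verified Lean document; each statement's English description precedes it below -/
import Mathlib

section
/- Let k ≥ 3 be odd and n ≥ 1. With ξ_{k,n} as defined via the product of contractions C_{2,3}C_{4,5}⋯C_{2k,1} on V_n^{⊗2k}, and e = Σ_{i=1}^n (p_i ∧ q_i)^{⊗k} ∈ (Λ²V_n)^{⊗k} (where each factor p_i∧q_i is viewed as p_i⊗q_i − q_i⊗p_i in V_n⊗V_n), one has ξ_{k,n}(e) = −2n. In particular ξ_{k,n} ≠ 0. -/
open scoped TensorProduct

abbrev Vn (n : ℕ) : Type := (Fin n ⊕ Fin n) → ℚ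

def pvec (n : ℕ) (i : Fin n) : Vn n := Pi.single (Sum.inl i) 1

def qvec (n : ℕ) (i : Fin n) : Vn n := Pi.single (Sum.inr i) 1

def wedge (V : Type*) [AddCommGroup V] [Module ℚ V] (a b : V) : ⋀[ℚ]^2 V :=
  ⟨ExteriorAlgebra.ιMulti ℚ 2 ![a, b],
    ExteriorAlgebra.ιMulti_range ℚ 2 (Set.mem_range_self _)⟩

/-- Expanding `a i ∧ b i = a i ⊗ b i - b i ⊗ a i`, the choice `ε i` picks the second summand;
contracting the right entry of each factor with the left entry of the next one gives this formula
for `ξ` on `(a 0 ∧ b 0) ⊗ ⋯ ⊗ (a (k-1) ∧ b (k-1))`. -/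
def cyclicContraction {R M : Type*} [CommRing R] [AddCommGroup M] [Module R M] {k : ℕ}
    [NeZero k] (ω : M →ₗ[R] M →ₗ[R] R) (a b : Fin k → M) : R :=
  ∑ ε : Fin k → Bool,
    (∏ i : Fin k, (if ε i then (-1 : R) else 1)) *
      ∏ i : Fin k, ω (if ε i then a i else b i) (if ε (i + 1) then b (i + 1) else a (i + 1))

namespace Fin

open Fin.NatCast in
theorem apply_eq_apply_zero_of_forall_apply_add_one {α : Type*} {k : ℕ} [NeZero k]
    {f : Fin k → α} (h : ∀ j, f (j + 1) = f j) (j : Fin k) : f j = f 0 := by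
  have hcast : ∀ m : ℕ, f (m : Fin k) = f 0 := by
    intro m
    induction m with
    | zero => simp
    | succ m ih => rw [Nat.cast_succ, h, ih]
  rw [← Fin.cast_val_eq_self j, hcast]

theorem exists_apply_add_one_ne {α : Type*} {k : ℕ} [NeZero k] {f : Fin k → α}
    {i j : Fin k} (hij : f i ≠ f j) : ∃ l, f (l + 1) ≠ f l := by
  by_contra! h
  exact hij ((apply_eq_apply_zero_of_forall_apply_add_one h i).trans
    (apply_eq_apply_zero_of_forall_apply_add_one h j).symm)

end Fin

section CyclicContraction

variable {R M : Type*} [CommRing R] [AddCommGroup M] [Module R M] {k : ℕ} [NeZero k]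
  (ω : M →ₗ[R] M →ₗ[R] R) {p q : M}

/-- Only the two constant choices `ε` survive: any other one switches between `p` and `q`
somewhere, producing a factor `ω p p` or `ω q q`. -/
theorem cyclicContraction_const (hpp : ω p p = 0) (hqq : ω q q = 0) :
    cyclicContraction ω (fun _ : Fin k => p) (fun _ => q) = (-1) ^ k * ω p q ^ k + ω q p ^ k := by
  have htf : (fun _ : Fin k => true) ≠ fun _ => false := fun h => by simpa using congrFun h 0
  rw [cyclicContraction, Fintype.sum_eq_add _ _ htf]
  · simp
  rintro ε ⟨hε_true, hε_false⟩
  obtain ⟨i, hi⟩ : ∃ i, ε i = false := by simpa [funext_iff] using hε_true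
  obtain ⟨j, hj⟩ : ∃ j, ε j = true := by simpa [funext_iff] using hε_false
  obtain ⟨l, hl⟩ := Fin.exists_apply_add_one_ne (f := ε) (i := i) (j := j) (by simp [hi, hj])
  refine mul_eq_zero_of_right _ (Finset.prod_eq_zero (Finset.mem_univ l) ?_)
  cases h : ε l <;> simp_all

end CyclicContraction

theorem stmt_3_general (k n : ℕ) [NeZero k] (hodd : Odd k) (hn : 1 ≤ n)
    (ω : Vn n →ₗ[ℚ] Vn n →ₗ[ℚ] ℚ)
    (hpq : ∀ i j, ω (pvec n i) (qvec n j) = if i = j then 1 else 0)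
    (hqp : ∀ i j, ω (qvec n i) (pvec n j) = if i = j then -1 else 0)
    (hpp : ∀ i j, ω (pvec n i) (pvec n j) = 0)
    (hqq : ∀ i j, ω (qvec n i) (qvec n j) = 0)
    (ξ : (⨂[ℚ] _ : Fin k, ↥(⋀[ℚ]^2 (Vn n))) →ₗ[ℚ] ℚ)
    (hξ : ∀ a b : Fin k → Vn n,
      ξ (PiTensorProduct.tprod ℚ (fun i => wedge (Vn n) (a i) (b i))) =
        ∑ ε : Fin k → Bool,
          (∏ i : Fin k, (if ε i then (-1 : ℚ) else 1)) *
            ∏ i : Fin k,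
              ω (if ε i then a i else b i)
                (if ε (i + 1) then b (i + 1) else a (i + 1))) :
    ξ (∑ i : Fin n,
        PiTensorProduct.tprod ℚ
          (fun _ : Fin k => wedge (Vn n) (pvec n i) (qvec n i))) = -(2 * n) ∧
    ξ ≠ 0 := by
  have hsummand : ∀ i : Fin n,
      ξ (PiTensorProduct.tprod ℚ (fun _ : Fin k => wedge (Vn n) (pvec n i) (qvec n i))) = -2 := by
    intro i
    rw [hξ, ← cyclicContraction, cyclicContraction_const ω (hpp i i) (hqq i i), hpq, hqp,
      if_pos rfl, if_pos rfl, hodd.neg_one_pow]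
    norm_num
  refine ⟨by simp [hsummand, mul_comm], fun hξ0 => ?_⟩
  simpa [hξ0] using hsummand ⟨0, hn⟩

/-- With `ξ_{k,n}` defined via the contractions `C₂,₃ C₄,₅ ⋯ C₂ₖ,₁` on `V^{⊗2k}`
(characterized on pure tensors of wedges), and `e = Σᵢ (pᵢ ∧ qᵢ)^{⊗k}`, one has
`ξ_{k,n}(e) = −2n`; in particular `ξ_{k,n} ≠ 0`. -/
theorem stmt_3 (k n : ℕ) [NeZero k] (hk : 3 ≤ k) (hodd : Odd k) (hn : 1 ≤ n)
    (ω : Vn n →ₗ[ℚ] Vn n →ₗ[ℚ] ℚ)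
    (hpq : ∀ i j, ω (pvec n i) (qvec n j) = if i = j then 1 else 0)
    (hqp : ∀ i j, ω (qvec n i) (pvec n j) = if i = j then -1 else 0)
    (hpp : ∀ i j, ω (pvec n i) (pvec n j) = 0)
    (hqq : ∀ i j, ω (qvec n i) (qvec n j) = 0)
    (ξ : (⨂[ℚ] _ : Fin k, ↥(⋀[ℚ]^2 (Vn n))) →ₗ[ℚ] ℚ)
    (hξ : ∀ a b : Fin k → Vn n,
      ξ (PiTensorProduct.tprod ℚ (fun i => wedge (Vn n) (a i) (b i))) =
        ∑ ε : Fin k → Bool,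
          (∏ i : Fin k, (if ε i then (-1 : ℚ) else 1)) *
            ∏ i : Fin k,
              ω (if ε i then a i else b i)
                (if ε (i + 1) then b (i + 1) else a (i + 1))) :
    ξ (∑ i : Fin n,
        PiTensorProduct.tprod ℚ
          (fun _ : Fin k => wedge (Vn n) (pvec n i) (qvec n i))) = -(2 * n) ∧
    ξ ≠ 0 :=
  stmt_3_general k n hodd hn ω hpq hqp hpp hqq ξ hξ
end

section
/- Let V_n be the standard 2n-dimensional rational symplectic vector space and define (𝔞_n)_i = (V_n^{⊗(i+2)})^{ℤ_{i+2}}, the subspace of tensors invariant under cyclic permutation, with bracket [·,·]: (𝔞_n)_i ⊗ (𝔞_n)_j → (𝔞_n)_{i+j} induced by the contraction C_{1,i+3}: V_n^{⊗(i+2)} ⊗ V_n^{⊗(j+2)} → V_n^{⊗(i+j+2)} followed by cyclic symmetrization. Then this bracket is antisymmetric: [x,y] = −[y,x] for all x ∈ (𝔞_n)_i, y ∈ (𝔞_n)_j. -/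
open scoped TensorProduct

instance (i j : ℕ) : NeZero (i + 1 + (j + 1)) := ⟨by omega⟩

/-!
The form `ω` is antisymmetric, being so on the symplectic basis. Swapping the arguments of the
contraction therefore negates the scalar `ω(v₀, w₀)` and exchanges the two blocks of remaining
tensor factors; exchanging the blocks is the `(i + 1)`-fold cyclic rotation. Since the rotation
has order `i + j + 2`, the cyclic symmetrization absorbs it, and `[y, x] = -[x, y]`.
-/

open PiTensorProduct Fin.NatCast

theorem Fin.append_cast_add_comm {α : Type*} {p q : ℕ} [NeZero (p + q)]
    (a : Fin p → α) (b : Fin q → α) (t : Fin (p + q)) :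
    Fin.append b a (t.cast (Nat.add_comm p q)) = Fin.append a b (t + (p : Fin (p + q))) := by
  obtain ⟨s, rfl⟩ : ∃ s : Fin (q + p), t = s.cast (Nat.add_comm q p) :=
    ⟨t.cast (Nat.add_comm p q), rfl⟩
  have hval : ∀ s : Fin (q + p), (s.cast (Nat.add_comm q p) + (p : Fin (p + q))).val
      = (s.val + p) % (p + q) := fun s => by rw [Fin.val_add, Fin.val_natCast, Nat.add_mod_mod]; rfl
  simp only [Fin.cast_cast, Fin.cast_eq_self]
  induction s using Fin.addCases with
  | left k =>
    have : (k.castAdd p).cast (Nat.add_comm q p) + (p : Fin (p + q)) = k.natAdd p := by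
      ext; rw [hval, Fin.val_castAdd, Fin.val_natAdd, Nat.mod_eq_of_lt (by omega), Nat.add_comm]
    rw [this, Fin.append_left, Fin.append_right]
  | right k =>
    have : (k.natAdd q).cast (Nat.add_comm q p) + (p : Fin (p + q)) = k.castAdd q := by
      ext
      rw [hval, Fin.val_castAdd, Fin.val_natAdd, Nat.mod_eq_sub_mod (by omega),
        Nat.mod_eq_of_lt (by omega)]
      omega
    rw [this, Fin.append_left, Fin.append_right]

theorem geom_sum_mul_pow_eq_self {A : Type*} [Ring A] {x : A} {N : ℕ} (hN : x ^ N = 1) (c : ℕ) :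
    (∑ t ∈ Finset.range N, x ^ t) * x ^ c = ∑ t ∈ Finset.range N, x ^ t := by
  have hx : (∑ t ∈ Finset.range N, x ^ t) * x = ∑ t ∈ Finset.range N, x ^ t := by
    have := geom_sum_mul x N
    rwa [hN, sub_self, mul_sub, mul_one, sub_eq_zero] at this
  induction c with
  | zero => rw [pow_zero, mul_one]
  | succ c ih => rw [pow_succ, ← mul_assoc, ih, hx]

theorem LinearMap.antisymm_of_basis {ι R M : Type*} [CommRing R] [AddCommGroup M] [Module R M]
    (b : Module.Basis ι R M) (ω : M →ₗ[R] M →ₗ[R] R)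
    (h : ∀ k l, ω (b l) (b k) = -ω (b k) (b l)) (u v : M) : ω v u = -ω u v := by
  have : ω.flip = -ω := LinearMap.ext_basis b b h
  exact LinearMap.congr_fun₂ this u v

theorem symplectic_antisymm {n : ℕ} (ω : Vn n →ₗ[ℚ] Vn n →ₗ[ℚ] ℚ)
    (hpq : ∀ a b, ω (pvec n a) (qvec n b) = if a = b then 1 else 0)
    (hqp : ∀ a b, ω (qvec n a) (pvec n b) = if a = b then -1 else 0)
    (hpp : ∀ a b, ω (pvec n a) (pvec n b) = 0)
    (hqq : ∀ a b, ω (qvec n a) (qvec n b) = 0) (u v : Vn n) : ω v u = -ω u v := by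
  have hp (a : Fin n) : Pi.basisFun ℚ (Fin n ⊕ Fin n) (.inl a) = pvec n a := by simp [pvec]
  have hq (a : Fin n) : Pi.basisFun ℚ (Fin n ⊕ Fin n) (.inr a) = qvec n a := by simp [qvec]
  refine LinearMap.antisymm_of_basis (Pi.basisFun ℚ _) ω (fun k l => ?_) u v
  rcases k with a | a <;> rcases l with b | b <;>
    simp only [hp, hq, hpp, hqq, hpq, hqp, neg_zero] <;> split_ifs <;> simp_all

section Rotation

variable {R M : Type*} [CommSemiring R] [AddCommMonoid M] [Module R M] {N : ℕ} [NeZero N]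
  {ρ : Module.End R (⨂[R] _ : Fin N, M)}

theorem rotation_pow_tprod
    (hρ : ∀ u : Fin N → M, ρ (tprod R u) = tprod R (fun t => u (t + 1)))
    (k : ℕ) (u : Fin N → M) : (ρ ^ k) (tprod R u) = tprod R (fun t => u (t + k)) := by
  induction k generalizing u with
  | zero => simp
  | succ k ih =>
    rw [pow_succ, Module.End.mul_apply, hρ, ih]
    simp only [Nat.cast_succ, add_assoc]

theorem rotation_pow_card
    (hρ : ∀ u : Fin N → M, ρ (tprod R u) = tprod R (fun t => u (t + 1))) :
    ρ ^ N = 1 := by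
  ext u
  simp only [LinearMap.compMultilinearMap_apply, Module.End.one_apply]
  rw [rotation_pow_tprod hρ]
  exact congrArg _ (funext fun t => by rw [Fin.natCast_self, add_zero])

end Rotation

theorem sum_rotation_pow_apply_pow {R M : Type*} [CommRing R] [AddCommGroup M] [Module R M]
    {N : ℕ} [NeZero N] {ρ : Module.End R (⨂[R] _ : Fin N, M)}
    (hρ : ∀ u : Fin N → M, ρ (tprod R u) = tprod R (fun t => u (t + 1))) (c : ℕ)
    (z : ⨂[R] _ : Fin N, M) :
    ∑ t ∈ Finset.range N, (ρ ^ t) ((ρ ^ c) z) = ∑ t ∈ Finset.range N, (ρ ^ t) z := by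
  simpa only [Module.End.mul_apply, LinearMap.sum_apply] using
    LinearMap.congr_fun (geom_sum_mul_pow_eq_self (rotation_pow_card hρ) c) z

theorem contraction_swap_eq_neg_rotation {R M : Type*} [CommRing R] [AddCommGroup M] [Module R M]
    {p q : ℕ} [NeZero (p + q)] {ω : M →ₗ[R] M →ₗ[R] R} (hω : ∀ u v, ω v u = -ω u v)
    {ρ : Module.End R (⨂[R] _ : Fin (p + q), M)}
    (hρ : ∀ u : Fin (p + q) → M, ρ (tprod R u) = tprod R (fun t => u (t + 1)))
    {C₁ : (⨂[R] _ : Fin (p + 1), M) →ₗ[R] (⨂[R] _ : Fin (q + 1), M) →ₗ[R]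
      (⨂[R] _ : Fin (p + q), M)}
    (hC₁ : ∀ (v : Fin (p + 1) → M) (w : Fin (q + 1) → M),
      C₁ (tprod R v) (tprod R w) =
        ω (v 0) (w 0) •
          tprod R (Fin.append (fun t : Fin p => v t.succ) (fun t : Fin q => w t.succ)))
    {C₂ : (⨂[R] _ : Fin (q + 1), M) →ₗ[R] (⨂[R] _ : Fin (p + 1), M) →ₗ[R]
      (⨂[R] _ : Fin (p + q), M)}
    (hC₂ : ∀ (w : Fin (q + 1) → M) (v : Fin (p + 1) → M),
      C₂ (tprod R w) (tprod R v) =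
        ω (w 0) (v 0) • tprod R (fun t : Fin (p + q) =>
          Fin.append (fun s : Fin q => w s.succ) (fun s : Fin p => v s.succ)
            (t.cast (Nat.add_comm p q))))
    (x : ⨂[R] _ : Fin (p + 1), M) (y : ⨂[R] _ : Fin (q + 1), M) :
    C₂ y x = -(ρ ^ p) (C₁ x y) := by
  suffices C₂ = -(C₁.compr₂ (ρ ^ p)).flip from LinearMap.congr_fun₂ this y x
  ext w v
  simp only [LinearMap.compMultilinearMap_apply, LinearMap.neg_apply, LinearMap.flip_apply,
    LinearMap.compr₂_apply, hC₁, hC₂, map_smul, rotation_pow_tprod hρ,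
    Fin.append_cast_add_comm, hω (v 0), neg_smul]

/-- The bracket on `𝔞ₙ`: on the cyclic invariants `(Vₙ^{⊗(i+2)})^{ℤ_{i+2}}`, it is the
contraction `C_{1,i+3}` (pairing the first factor of `x` with the first factor of `y`
via `ω`) followed by cyclic symmetrization (averaging over the cyclic group).  This
bracket is antisymmetric: `[x,y] = −[y,x]`. -/
theorem stmt_4 (n i j : ℕ)
    (ω : Vn n →ₗ[ℚ] Vn n →ₗ[ℚ] ℚ)
    (hpq : ∀ a b, ω (pvec n a) (qvec n b) = if a = b then 1 else 0)
    (hqp : ∀ a b, ω (qvec n a) (pvec n b) = if a = b then -1 else 0)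
    (hpp : ∀ a b, ω (pvec n a) (pvec n b) = 0)
    (hqq : ∀ a b, ω (qvec n a) (qvec n b) = 0)
    -- cyclic rotation operators on the tensor powers
    (ρm : Module.End ℚ (⨂[ℚ] _ : Fin (i + 1 + (j + 1)), Vn n))
    (hρm : ∀ u : Fin (i + 1 + (j + 1)) → Vn n,
      ρm (PiTensorProduct.tprod ℚ u) = PiTensorProduct.tprod ℚ (fun t => u (t + 1)))
    -- the contraction `C_{1,i+3}` in the two orders
    (C1 : (⨂[ℚ] _ : Fin (i + 2), Vn n) →ₗ[ℚ] (⨂[ℚ] _ : Fin (j + 2), Vn n) →ₗ[ℚ]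
      (⨂[ℚ] _ : Fin (i + 1 + (j + 1)), Vn n))
    (hC1 : ∀ (v : Fin (i + 2) → Vn n) (w : Fin (j + 2) → Vn n),
      C1 (PiTensorProduct.tprod ℚ v) (PiTensorProduct.tprod ℚ w) =
        ω (v 0) (w 0) •
          PiTensorProduct.tprod ℚ
            (Fin.append (fun t : Fin (i + 1) => v t.succ) (fun t : Fin (j + 1) => w t.succ)))
    (C2 : (⨂[ℚ] _ : Fin (j + 2), Vn n) →ₗ[ℚ] (⨂[ℚ] _ : Fin (i + 2), Vn n) →ₗ[ℚ]
      (⨂[ℚ] _ : Fin (i + 1 + (j + 1)), Vn n))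
    (hC2 : ∀ (w : Fin (j + 2) → Vn n) (v : Fin (i + 2) → Vn n),
      C2 (PiTensorProduct.tprod ℚ w) (PiTensorProduct.tprod ℚ v) =
        ω (w 0) (v 0) •
          PiTensorProduct.tprod ℚ
            (fun t : Fin (i + 1 + (j + 1)) =>
              Fin.append (fun s : Fin (j + 1) => w s.succ) (fun s : Fin (i + 1) => v s.succ)
                (Fin.cast (by omega) t)))
    (x : ⨂[ℚ] _ : Fin (i + 2), Vn n) (y : ⨂[ℚ] _ : Fin (j + 2), Vn n) :
    ((i + 1 + (j + 1) : ℚ))⁻¹ •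
        ∑ t ∈ Finset.range (i + 1 + (j + 1)), (ρm ^ t) (C1 x y) =
      -(((i + 1 + (j + 1) : ℚ))⁻¹ •
        ∑ t ∈ Finset.range (i + 1 + (j + 1)), (ρm ^ t) (C2 y x)) := by
  rw [contraction_swap_eq_neg_rotation (symplectic_antisymm ω hpq hqp hpp hqq) hρm hC1 hC2 x y]
  simp only [map_neg, Finset.sum_neg_distrib, smul_neg, neg_neg, sum_rotation_pow_apply_pow hρm]
end

section
/- With X_k the necklace ribbon graph (k-cycle of vertices with a loop at each vertex, 2k edges total), the reflection symmetry reverses all 2k edge directions and permutes the k vertices by the reflection permutation i ↦ k+1−i of sign (−1)^{⌊k/2⌋}. Since reversing 2k edges contributes a sign (−1)^{2k} = +1, this symmetry is orientation-reversing iff ⌊k/2⌋ is odd, i.e., iff k ≡ 2,3 mod 4. Combining with the rotational symmetry, X_k is nonzero in the ribbon graph complex if and only if k ≡ 1 mod 4 and k ≠ 1. -/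
open Equiv

lemma rev_decomp (n : ℕ) :
    (Fin.revPerm : Perm (Fin (n+1))) =
      Equiv.Perm.decomposeFin.symm (Fin.last n, (Fin.revPerm : Perm (Fin n)) * finRotate n) := by
  ext i
  cases n with
  | zero => omega
  | succ m =>
    refine Fin.cases ?_ (fun x => ?_) i
    · simp
    · rw [Equiv.Perm.decomposeFin_symm_apply_succ]
      rcases eq_or_ne x (Fin.last m) with h | h
      · subst h
        have : (((Fin.revPerm : Perm (Fin (m+1))) * finRotate (m+1)) (Fin.last m)) = Fin.last m := by
          simp [Equiv.Perm.mul_apply, finRotate_last, Fin.rev, Fin.ext_iff]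
        rw [this]
        simp [Fin.rev, Fin.ext_iff, Fin.last]
      · have hx : (x : ℕ) < m := by
          have := x.isLt; have : (x:ℕ) ≠ m := fun hh => h (Fin.ext hh); omega
        have h1 : (((Fin.revPerm : Perm (Fin (m+1))) * finRotate (m+1)) x : ℕ) = m - 1 - x := by
          rw [Equiv.Perm.mul_apply]
          rw [Fin.revPerm_apply, Fin.val_rev, coe_finRotate, if_neg h]
          omega
        have h2 : (((Fin.revPerm : Perm (Fin (m+1))) * finRotate (m+1)) x).succ ≠ 0 := Fin.succ_ne_zero _
        have h3 : (((Fin.revPerm : Perm (Fin (m+1))) * finRotate (m+1)) x).succ ≠ Fin.last (m+1) := by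
          rw [Ne, Fin.ext_iff, Fin.val_succ, h1, Fin.val_last]; omega
        rw [swap_apply_of_ne_of_ne h2 h3]
        rw [Fin.revPerm_apply, Fin.val_rev, Fin.val_succ, Fin.val_succ, h1]
        omega

lemma sign_rev : ∀ n : ℕ, Equiv.Perm.sign (Fin.revPerm : Perm (Fin n)) = (-1) ^ (n / 2)
  | 0 => by decide
  | 1 => by decide
  | (m+2) => by
    rw [rev_decomp (m+1), Equiv.Perm.decomposeFin.symm_sign,
      if_neg (by simp [Fin.ext_iff] : (Fin.last (m+1) : Fin (m+2)) ≠ 0),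
      map_mul, sign_rev (m+1), sign_finRotate]
    have key : ∀ a b : ℕ, a % 2 = b % 2 → ((-1 : ℤˣ)) ^ a = (-1) ^ b := by
      intro a b h
      rcases Nat.even_or_odd a with ha | ha
      · have ha' := Nat.even_iff.1 ha
        rw [ha.neg_one_pow, (Nat.even_iff.2 (by omega)).neg_one_pow]
      · have ha' := Nat.odd_iff.1 ha
        rw [ha.neg_one_pow, (Nat.odd_iff.2 (by omega)).neg_one_pow]
    rw [← pow_add, ← pow_succ']
    rcases Nat.even_or_odd m with hm | hm
    · have hm' := Nat.even_iff.1 hm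
      exact key _ _ (by omega)
    · have hm' := Nat.odd_iff.1 hm
      exact key _ _ (by omega)

/-- For the necklace ribbon graph `X_k` (`k ≥ 2`): the reflection symmetry reverses all
`2k` edge directions, contributing sign `(−1)^{2k} = +1`, and permutes the vertices by
`i ↦ k+1−i` of sign `(−1)^{⌊k/2⌋}`; so it is orientation-reversing iff `k ≡ 2, 3 mod 4`.
Combining with the rotation (a `k`-cycle on vertices preserving edge directions), both
generating symmetries are orientation-preserving — i.e. `X_k` is nonzero in the ribbon
graph complex — if and only if `k ≡ 1 mod 4` (and `k ≠ 1`). -/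
theorem stmt_8 (k : ℕ) (hk : 2 ≤ k) :
    ((-1 : ℤ) ^ (2 * k) = 1) ∧
      (((Equiv.Perm.sign (Fin.revPerm : Equiv.Perm (Fin k)) : ℤ) * (-1) ^ (2 * k) = -1) ↔
        (k % 4 = 2 ∨ k % 4 = 3)) ∧
      ((((Equiv.Perm.sign (finRotate k) : ℤ) = 1) ∧
          ((Equiv.Perm.sign (Fin.revPerm : Equiv.Perm (Fin k)) : ℤ) * (-1) ^ (2 * k) = 1)) ↔
        (k % 4 = 1 ∧ k ≠ 1)) := by
  have hA : (-1 : ℤ) ^ (2 * k) = 1 := by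
    rw [pow_mul]; norm_num
  have hrev : ((Equiv.Perm.sign (Fin.revPerm : Equiv.Perm (Fin k)) : ℤˣ) : ℤ)
      = (-1) ^ (k / 2) := by
    rw [sign_rev k]; push_cast; ring
  obtain ⟨m, rfl⟩ : ∃ m, k = m + 1 := ⟨k - 1, by omega⟩
  have hrot : ((Equiv.Perm.sign (finRotate (m + 1)) : ℤˣ) : ℤ) = (-1) ^ m := by
    rw [sign_finRotate]; push_cast; ring
  rw [hrev, hrot, hA, mul_one]
  refine ⟨rfl, ?_, ?_⟩
  · rcases Nat.even_or_odd ((m + 1) / 2) with h | h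
    · have h' := Nat.even_iff.1 h
      rw [h.neg_one_pow]
      constructor
      · intro h2; norm_num at h2
      · intro h2; omega
    · have h' := Nat.odd_iff.1 h
      rw [h.neg_one_pow]
      constructor
      · intro _; omega
      · intro _; rfl
  · rcases Nat.even_or_odd ((m + 1) / 2) with h | h <;>
      rcases Nat.even_or_odd m with hm | hm <;>
      [skip; skip; skip; skip] <;>
      first
      | (have h' := Nat.even_iff.1 h; have hm' := Nat.even_iff.1 hm
         rw [h.neg_one_pow, hm.neg_one_pow]; constructor
         · rintro ⟨-, -⟩; omega
         · intro hh; exact ⟨rfl, rfl⟩)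
      | (have h' := Nat.even_iff.1 h; have hm' := Nat.odd_iff.1 hm
         rw [h.neg_one_pow, hm.neg_one_pow]; constructor
         · rintro ⟨hh, -⟩; norm_num at hh
         · intro hh; omega)
      | (have h' := Nat.odd_iff.1 h; have hm' := Nat.even_iff.1 hm
         rw [h.neg_one_pow, hm.neg_one_pow]; constructor
         · rintro ⟨-, hh⟩; norm_num at hh
         · intro hh; omega)
      | (have h' := Nat.odd_iff.1 h; have hm' := Nat.odd_iff.1 hm
         rw [h.neg_one_pow, hm.neg_one_pow]; constructor
         · rintro ⟨hh, -⟩; norm_num at hh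
         · intro hh; omega)
end

section
/- Let f(x) = (x+x²+x³)·(1−x⁴−2x⁸−x¹²+x¹⁶)/((1−x⁸)(1−x¹²)) as a formal power series over ℚ. Then the coefficient of x^m in f is 0 whenever m ≡ 0 mod 4. -/
open PowerSeries

/-- Getzler's generating function
`(x+x²+x³)(1−x⁴−2x⁸−x¹²+x¹⁶)/((1−x⁸)(1−x¹²))` as a formal power series over `ℚ`. -/
noncomputable def getzlerF : PowerSeries ℚ :=
  (X + X ^ 2 + X ^ 3) * (1 - X ^ 4 - 2 * X ^ 8 - X ^ 12 + X ^ 16) *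
    ((1 - X ^ 8)⁻¹ * (1 - X ^ 12)⁻¹)

/-!
Every factor of `getzlerF` except `x + x² + x³` is a power series in `x⁴`, and such series form
a subring of `ℚ⟦X⟧` closed under inversion. Multiplying a series in `x⁴` by `x + x² + x³`, whose
exponents are all prime to `4`, leaves no exponent divisible by `4`.
-/

namespace PowerSeries

section CommRing

variable {R : Type*} [CommRing R]

def seriesInXPow (d : ℕ) : Subring R⟦X⟧ where
  carrier := {f | ∀ n, ¬ d ∣ n → coeff n f = 0}
  one_mem' n hn := by
    rw [coeff_one, if_neg]
    rintro rfl
    exact hn (dvd_zero d)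
  mul_mem' {f g} hf hg n hn := by
    rw [coeff_mul]
    refine Finset.sum_eq_zero fun ⟨i, j⟩ hij => ?_
    rw [Finset.HasAntidiagonal.mem_antidiagonal] at hij
    by_cases hi : d ∣ i
    · rw [hg j fun hj => hn (hij ▸ dvd_add hi hj), mul_zero]
    · rw [hf i hi, zero_mul]
  add_mem' {f g} hf hg n hn := by rw [map_add, hf n hn, hg n hn, add_zero]
  zero_mem' n _ := map_zero _
  neg_mem' {f} hf n hn := by rw [map_neg, hf n hn, neg_zero]

theorem X_pow_mem_seriesInXPow (d : ℕ) : (X ^ d : R⟦X⟧) ∈ seriesInXPow d := by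
  intro n hn
  rw [coeff_X_pow, if_neg]
  rintro rfl
  exact hn dvd_rfl

theorem coeff_mul_eq_zero_of_dvd {d n : ℕ} {p g : R⟦X⟧} (hp : ∀ i, d ∣ i → coeff i p = 0)
    (hg : g ∈ seriesInXPow d) (hn : d ∣ n) : coeff n (p * g) = 0 := by
  rw [coeff_mul]
  refine Finset.sum_eq_zero fun ⟨i, j⟩ hij => ?_
  rw [Finset.HasAntidiagonal.mem_antidiagonal] at hij
  by_cases hi : d ∣ i
  · rw [hp i hi, zero_mul]
  · rw [hg j fun hj => hi ((Nat.dvd_add_left hj).mp (hij ▸ hn)), mul_zero]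

end CommRing

theorem inv_mem_seriesInXPow {k : Type*} [Field k] {d : ℕ} {f : k⟦X⟧}
    (hf : f ∈ seriesInXPow d) : f⁻¹ ∈ seriesInXPow d := by
  intro n
  induction n using Nat.strong_induction_on with
  | _ n ih =>
    intro hn
    have hn0 : n ≠ 0 := by
      rintro rfl
      exact hn (dvd_zero d)
    rw [coeff_inv, if_neg hn0, Finset.sum_eq_zero, mul_zero]
    rintro ⟨i, j⟩ hij
    rw [Finset.HasAntidiagonal.mem_antidiagonal] at hij
    split_ifs with hjn
    · by_cases hj : d ∣ j
      · rw [hf i fun hi => hn (hij ▸ dvd_add hi hj), zero_mul]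
      · rw [ih j hjn hj, mul_zero]
    · rfl

end PowerSeries

/-- The coefficient of `xᵐ` in Getzler's generating function vanishes whenever
`m ≡ 0 mod 4`. -/
theorem stmt_13 (m : ℕ) (hm : m % 4 = 0) : PowerSeries.coeff m getzlerF = 0 := by
  have hX : ∀ k, (X ^ (4 * k) : ℚ⟦X⟧) ∈ seriesInXPow 4 := fun k => by
    rw [pow_mul]
    exact pow_mem (X_pow_mem_seriesInXPow 4) k
  have hg : (1 - X ^ 4 - 2 * X ^ 8 - X ^ 12 + X ^ 16 : ℚ⟦X⟧) *
      ((1 - X ^ 8)⁻¹ * (1 - X ^ 12)⁻¹) ∈ seriesInXPow 4 :=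
    mul_mem
      (add_mem (sub_mem (sub_mem (sub_mem (one_mem _) (hX 1))
        (mul_mem (natCast_mem _ 2) (hX 2))) (hX 3)) (hX 4))
      (mul_mem (inv_mem_seriesInXPow (sub_mem (one_mem _) (hX 2)))
        (inv_mem_seriesInXPow (sub_mem (one_mem _) (hX 3))))
  rw [getzlerF, mul_assoc]
  refine coeff_mul_eq_zero_of_dvd (fun i hi => ?_) hg (Nat.dvd_of_mod_eq_zero hm)
  have : i ≠ 1 ∧ i ≠ 2 ∧ i ≠ 3 := by omega
  simp [coeff_X, coeff_X_pow, this]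
end

section
/- Contracting an interior (non-root, non-leaf-adjacent) edge of a planar binary rooted tree produces a tree with one 4-valent vertex, and every planar rooted tree with exactly one 4-valent vertex and all other internal vertices 3-valent arises in exactly two ways as such a contraction of planar binary rooted trees. Hence, in the free ℚ-vector space on planar binary rooted trees with a signed contraction operator d (where the two expansions of a 4-valent vertex occur with opposite signs), the sum T_i of all planar binary rooted trees with i leaves satisfies: the interior-edge contributions to d(T_i) cancel in pairs. -/
/-! The coefficient of `x : T3` in the contraction multiset of a binary tree `t` is
`[t = e1 x] + [t = e2 x]`: by induction on `t`, a contraction at the root is a `tern`, and one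
below the root is a `left`/`right` recording the untouched subtree. The two expansions are
distinct and have the same number of nodes, so in the coefficient of `x` in `∑ d t` exactly
these two trees survive, and their contributions cancel. -/

/-- Planar rooted trees in which every internal vertex is binary (`Tree Unit`) except for
exactly one 4-valent (ternary) vertex. -/
inductive T3 : Type
  | tern : Tree Unit → Tree Unit → Tree Unit → T3
  | left : T3 → Tree Unit → T3
  | right : Tree Unit → T3 → T3
  deriving DecidableEq

/-- The first binary expansion of the unique ternary vertex: `(a b c) ↦ ((a b) c)`. -/
def e1 : T3 → Tree Unit
  | .tern a b c => .node () (.node () a b) c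
  | .left x r => .node () (e1 x) r
  | .right l x => .node () l (e1 x)

/-- The second binary expansion of the unique ternary vertex: `(a b c) ↦ (a (b c))`. -/
def e2 : T3 → Tree Unit
  | .tern a b c => .node () a (.node () b c)
  | .left x r => .node () (e2 x) r
  | .right l x => .node () l (e2 x)

/-- The multiset of contractions of the interior edges (edges joining two internal
vertices) of a planar binary rooted tree; contracting such an edge creates one
4-valent vertex. -/
def contr : Tree Unit → Multiset T3
  | .nil => 0
  | .node _ l r =>
      (match l with
        | .nil => 0
        | .node _ a b => ({T3.tern a b r} : Multiset T3)) +
      (match r with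
        | .nil => 0
        | .node _ a b => ({T3.tern l a b} : Multiset T3)) +
      (contr l).map (fun x => T3.left x r) + (contr r).map (fun x => T3.right l x)

lemma numNodes_e1_eq_numNodes_e2 (x : T3) : (e1 x).numNodes = (e2 x).numNodes := by
  induction x with
  | tern a b c => simp only [e1, e2, BinaryTree.numNodes]; omega
  | left y r ih | right r y ih => simp only [e1, e2, BinaryTree.numNodes, ih]

lemma e1_ne_e2 (x : T3) : e1 x ≠ e2 x := by
  induction x with
  | tern a b c =>
    intro h
    have := congrArg BinaryTree.numNodes (BinaryTree.node.inj h).2.1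
    simp only [BinaryTree.numNodes] at this
    omega
  | left y r ih => exact fun h => ih (BinaryTree.node.inj h).2.1
  | right l y ih => exact fun h => ih (BinaryTree.node.inj h).2.2

lemma contr_node (u : Unit) (l r : BinaryTree Unit) :
    contr (.node u l r) =
      (match l with
        | .nil => 0
        | .node _ a b => ({T3.tern a b r} : Multiset T3)) +
      (match r with
        | .nil => 0
        | .node _ a b => ({T3.tern l a b} : Multiset T3)) +
      (contr l).map (fun x => T3.left x r) + (contr r).map (fun x => T3.right l x) := rfl

theorem count_contr (x : T3) (t : BinaryTree Unit) :
    (contr t).count x = (if t = e1 x then 1 else 0) + (if t = e2 x then 1 else 0) := by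
  induction t generalizing x with
  | nil => cases x <;> simp [contr, e1, e2]
  | node u l r ihl ihr =>
    rw [contr_node]
    cases x with
    | tern a b c =>
      have hl : ((contr l).map (T3.left · r)).count (.tern a b c) = 0 :=
        Multiset.count_eq_zero.2 (by simp)
      have hr : ((contr r).map (T3.right l ·)).count (.tern a b c) = 0 :=
        Multiset.count_eq_zero.2 (by simp)
      simp only [Multiset.count_add, hl, hr, add_zero, e1, e2]
      cases l <;> cases r <;> simp [Multiset.count_singleton] <;> grind
    | left y r' =>
      have hl : ((contr l).map (T3.left · r)).count (.left y r') =
          if r = r' then (contr l).count y else 0 := by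
        split_ifs with h
        · subst h; exact Multiset.count_map_eq_count' _ _ (fun _ _ h => by simpa using h) _
        · exact Multiset.count_eq_zero.2 (by simp [h])
      have hr : ((contr r).map (T3.right l ·)).count (.left y r') = 0 :=
        Multiset.count_eq_zero.2 (by simp)
      simp only [Multiset.count_add, hl, hr, add_zero, e1, e2, ihl]
      cases l <;> cases r <;> simp <;> grind
    | right l' y =>
      have hl : ((contr l).map (T3.left · r)).count (.right l' y) = 0 :=
        Multiset.count_eq_zero.2 (by simp)
      have hr : ((contr r).map (T3.right l ·)).count (.right l' y) =
          if l = l' then (contr r).count y else 0 := by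
        split_ifs with h
        · subst h; exact Multiset.count_map_eq_count' _ _ (fun _ _ h => by simpa using h) _
        · exact Multiset.count_eq_zero.2 (by simp [h])
      simp only [Multiset.count_add, hl, hr, add_zero, e1, e2, ihr]
      cases l <;> cases r <;> simp <;> grind

lemma eq_e1_or_eq_e2_of_mem_contr {x : T3} {t : BinaryTree Unit} (h : x ∈ contr t) :
    t = e1 x ∨ t = e2 x := by
  rw [← Multiset.count_pos, count_contr] at h
  by_contra! hne
  simp [hne.1, hne.2] at h

theorem Finset.sum_eq_zero_of_support_subset_pair {α M : Type*} [AddCommGroup M]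
    {s : Finset α} {g : α → M} {a b : α} (hab : a ≠ b) (hs : a ∈ s ↔ b ∈ s)
    (hg : ∀ t, g t ≠ 0 → t = a ∨ t = b) (hneg : g a = -g b) : ∑ t ∈ s, g t = 0 := by
  classical
  have hzero : ∀ t ∈ s, t ∉ ({a, b} : Finset α) → g t = 0 := fun t _ ht => by
    by_contra hgt
    exact ht (by simpa using hg t hgt)
  by_cases ha : a ∈ s
  · have hsub : ({a, b} : Finset α) ⊆ s := by simp [Finset.insert_subset_iff, ha, hs.1 ha]
    rw [← Finset.sum_subset hsub hzero, Finset.sum_pair hab, hneg, neg_add_cancel]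
  · refine Finset.sum_eq_zero fun t ht => hzero t ht ?_
    simp only [Finset.mem_insert, Finset.mem_singleton, not_or]
    exact ⟨by rintro rfl; exact ha ht, by rintro rfl; exact ha (hs.2 ht)⟩

theorem stmt_18_general (i : ℕ) :
    (∀ x : T3,
      Multiset.count x (contr (e1 x)) = 1 ∧
      Multiset.count x (contr (e2 x)) = 1 ∧
      e1 x ≠ e2 x ∧
      ∀ t : Tree Unit, x ∈ contr t → t = e1 x ∨ t = e2 x) ∧
    (∀ d : Tree Unit → (T3 →₀ ℚ),
      (∀ t x, x ∉ contr t → d t x = 0) →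
      (∀ x : T3, d (e1 x) x = -d (e2 x) x) →
      ∑ t ∈ Tree.treesOfNumNodesEq (i - 1), d t = 0) := by
  refine ⟨fun x => ⟨?_, ?_, e1_ne_e2 x, fun t => eq_e1_or_eq_e2_of_mem_contr⟩, ?_⟩
  · simp [count_contr, e1_ne_e2 x]
  · simp [count_contr, (e1_ne_e2 x).symm]
  · intro d hsupp hanti
    ext x
    rw [Finsupp.finset_sum_apply, Finsupp.zero_apply]
    refine Finset.sum_eq_zero_of_support_subset_pair (e1_ne_e2 x) ?_
      (fun t ht => eq_e1_or_eq_e2_of_mem_contr (not_imp_comm.1 (hsupp t x) ht)) (hanti x)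
    simp only [BinaryTree.mem_treesOfNumNodesEq, numNodes_e1_eq_numNodes_e2]

/-- Contracting an interior edge of a planar binary rooted tree produces a tree with one
4-valent vertex, and every such tree arises in exactly two (distinct) ways, namely from
its two binary expansions.  Hence, for any signed contraction operator `d` (supported on
the contractions, with the two expansions of each 4-valent vertex occurring with opposite
signs), the interior-edge contributions to `d(T_i)` — the sum over all planar binary
rooted trees with `i` leaves, i.e. `i − 1` internal nodes — cancel in pairs. -/
theorem stmt_18 (i : ℕ) (hi : 1 ≤ i) :
    (∀ x : T3,
      Multiset.count x (contr (e1 x)) = 1 ∧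
      Multiset.count x (contr (e2 x)) = 1 ∧
      e1 x ≠ e2 x ∧
      ∀ t : Tree Unit, x ∈ contr t → t = e1 x ∨ t = e2 x) ∧
    (∀ d : Tree Unit → (T3 →₀ ℚ),
      (∀ t x, x ∉ contr t → d t x = 0) →
      (∀ x : T3, d (e1 x) x = -d (e2 x) x) →
      ∑ t ∈ Tree.treesOfNumNodesEq (i - 1), d t = 0) :=
  stmt_18_general i
end
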